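/- arXiv:1908.10775 — 6 statements merged into one kernel-verified Lean document; each statement's English description precedes it below -/
import Mathlib

section
/- Every harmonic function v : ℝ³ → ℝ that is square integrable over ℝ³, i.e. ∫_{ℝ³} v(x)² dx < ∞, vanishes identically: v(x) = 0 for all x ∈ ℝ³. -/
open MeasureTheory

/-- The partial derivative of `f : ℝ³ → ℝ` in the `i`-th coordinate direction at `x`. -/
noncomputable def pd (f : EuclideanSpace ℝ (Fin 3) → ℝ) (i : Fin 3)
    (x : EuclideanSpace ℝ (Fin 3)) : ℝ :=
  fderiv ℝ f x (EuclideanSpace.single i 1)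

/-- A function `v : ℝ³ → ℝ` is harmonic if it is twice continuously differentiable
and its Laplacian `Δv = ∂₁₁v + ∂₂₂v + ∂₃₃v` vanishes identically. -/
def Harmonic (v : EuclideanSpace ℝ (Fin 3) → ℝ) : Prop :=
  ContDiff ℝ 2 v ∧ ∀ x, ∑ i, pd (pd v i) i x = 0

section Aux

open Metric Set Function Filter

local notation "E3" => EuclideanSpace ℝ (Fin 3)

lemma hcs_mul_right {f g : E3 → ℝ} (h : HasCompactSupport f) :
    HasCompactSupport (fun x => f x * g x) :=
  h.mono (fun y hy => by
    simp only [Function.mem_support] at hy ⊢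
    intro h0; exact hy (by simp [h0]))

lemma hcs_mul_left {f g : E3 → ℝ} (h : HasCompactSupport g) :
    HasCompactSupport (fun x => f x * g x) :=
  h.mono (fun y hy => by
    simp only [Function.mem_support] at hy ⊢
    intro h0; exact hy (by simp [h0]))

lemma contDiff_pd {f : E3 → ℝ} (hf : ContDiff ℝ 2 f) (i : Fin 3) :
    ContDiff ℝ 1 (pd f i) := by
  have h1 : ContDiff ℝ 1 (fderiv ℝ f) := hf.fderiv_right (by norm_num)
  exact (ContinuousLinearMap.apply ℝ ℝ (EuclideanSpace.single i (1:ℝ))).contDiff.comp h1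

lemma continuous_pd {f : E3 → ℝ} (hf : ContDiff ℝ 1 f) (i : Fin 3) :
    Continuous (pd f i) :=
  (ContinuousLinearMap.apply ℝ ℝ (EuclideanSpace.single i (1:ℝ))).continuous.comp
    (hf.continuous_fderiv (by simp))

lemma hcs_pd {f : E3 → ℝ} (h : HasCompactSupport f) (i : Fin 3) :
    HasCompactSupport (pd f i) :=
  h.fderiv_apply ℝ (EuclideanSpace.single i (1:ℝ))

/-- Integration by parts on `ℝ³` for a `C¹` function against a compactly supported
`C¹` function. -/
lemma ibp (f g : E3 → ℝ) (hf : ContDiff ℝ 1 f) (hg : ContDiff ℝ 1 g)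
    (h'g : HasCompactSupport g) (w : E3) :
    ∫ x, fderiv ℝ f x w * g x = - ∫ x, f x * fderiv ℝ g x w := by
  obtain ⟨r, hr0, hr⟩ := h'g.isBounded.subset_ball_lt 0 0
  set b : ContDiffBump (0 : E3) := ⟨r, r + 1, hr0, by linarith⟩ with hb
  set F : E3 → ℝ := fun x => b x * f x with hF
  have hbc : ContDiff ℝ 1 (fun x : E3 => b x) := b.contDiff
  have hFc : HasCompactSupport F := hcs_mul_right b.hasCompactSupport
  have hFd : ContDiff ℝ 1 F := hbc.mul hf
  obtain ⟨C, hC⟩ := ContDiff.lipschitzWith_of_hasCompactSupport hFc hFd (by simp)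
  obtain ⟨D, hD⟩ := ContDiff.lipschitzWith_of_hasCompactSupport h'g hg (by simp)
  have key : ∫ x, lineDeriv ℝ F x w * g x = ∫ x, lineDeriv ℝ g x (-w) * F x :=
    hC.integral_lineDeriv_mul_eq hD h'g w
  have hFdiff : Differentiable ℝ F := hFd.differentiable (by simp)
  have hgdiff : Differentiable ℝ g := hg.differentiable (by simp)
  have eqL : ∀ x, lineDeriv ℝ F x w * g x = fderiv ℝ f x w * g x := by
    intro x
    by_cases hx : g x = 0
    · simp [hx]
    · have hxm : x ∈ Metric.ball (0 : E3) r :=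
        hr (subset_tsupport g (by simpa [Function.mem_support] using hx))
      have hFf : F =ᶠ[nhds x] f := by
        filter_upwards [Metric.isOpen_ball.mem_nhds hxm] with y hy
        have h1 : b y = 1 := b.one_of_mem_closedBall (Metric.ball_subset_closedBall hy)
        simp [hF, h1]
      rw [(hFdiff x).lineDeriv_eq_fderiv, hFf.fderiv_eq]
  have eqR : ∀ x, lineDeriv ℝ g x (-w) * F x = -(f x * fderiv ℝ g x w) := by
    intro x
    rw [(hgdiff x).lineDeriv_eq_fderiv, map_neg]
    by_cases hx : x ∈ tsupport g
    · have hxm : x ∈ Metric.ball (0 : E3) r := hr hx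
      have h1 : b x = 1 := b.one_of_mem_closedBall (Metric.ball_subset_closedBall hxm)
      simp [hF, h1]; ring
    · have h1 : fderiv ℝ g x = 0 := by
        by_contra h
        exact hx (support_fderiv_subset ℝ (by simpa [Function.mem_support] using h))
      simp [h1]
  calc ∫ x, fderiv ℝ f x w * g x = ∫ x, lineDeriv ℝ F x w * g x :=
        integral_congr_ae (Filter.EventuallyEq.of_eq (funext fun x => (eqL x).symm))
    _ = ∫ x, lineDeriv ℝ g x (-w) * F x := key
    _ = ∫ x, -(f x * fderiv ℝ g x w) :=
        integral_congr_ae (Filter.EventuallyEq.of_eq (funext fun x => eqR x))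
    _ = - ∫ x, f x * fderiv ℝ g x w := integral_neg _

/-- Caccioppoli-type inequality for harmonic `v` against a compactly supported cutoff. -/
lemma caccioppoli (v : E3 → ℝ) (hv2 : ContDiff ℝ 2 v) (hlap : ∀ x, ∑ i, pd (pd v i) i x = 0)
    (φ : E3 → ℝ) (hφ : ContDiff ℝ 1 φ) (hφc : HasCompactSupport φ) :
    ∑ i, ∫ x, (φ x)^2 * (pd v i x)^2 ≤ 4 * ∑ i, ∫ x, (pd φ i x)^2 * (v x)^2 := by
  have hv1 : ContDiff ℝ 1 v := hv2.of_le (by norm_num)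
  have hvd : Differentiable ℝ v := hv1.differentiable (by simp)
  have hφd : Differentiable ℝ φ := hφ.differentiable (by simp)
  set w : E3 → ℝ := fun y => (φ y)^2 * v y with hw
  have hwC : ContDiff ℝ 1 w := (hφ.pow 2).mul hv1
  have hwc : HasCompactSupport w := hφc.mono (fun y hy => by
    simp only [Function.mem_support] at hy ⊢
    intro h0; exact hy (by simp [hw, h0]))
  -- continuity facts
  have hPv : ∀ i, ContDiff ℝ 1 (pd v i) := contDiff_pd hv2
  have hPvc : ∀ i : Fin 3, Continuous (pd v i) := fun i => (hPv i).continuous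
  have hPφc : ∀ i : Fin 3, Continuous (pd φ i) := continuous_pd hφ
  -- integrability facts
  have intg1 : ∀ i : Fin 3, Integrable (fun x => (φ x)^2 * (pd v i x)^2) := by
    intro i
    refine Continuous.integrable_of_hasCompactSupport
      (((hφ.continuous).pow 2).mul ((hPvc i).pow 2)) ?_
    exact hφc.mono (fun y hy => by
      simp only [Function.mem_support] at hy ⊢
      intro h0; exact hy (by simp [h0]))
  have intg2 : ∀ i : Fin 3, Integrable (fun x => (2 * φ x * pd φ i x) * (v x * pd v i x)) := by
    intro i
    refine Continuous.integrable_of_hasCompactSupport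
      (((continuous_const.mul hφ.continuous).mul (hPφc i)).mul
        ((hv1.continuous).mul (hPvc i))) ?_
    exact hφc.mono (fun y hy => by
      simp only [Function.mem_support] at hy ⊢
      intro h0; exact hy (by simp [h0]))
  have intgD : ∀ i : Fin 3, Integrable (fun x => (pd φ i x)^2 * (v x)^2) := by
    intro i
    refine Continuous.integrable_of_hasCompactSupport
      (((hPφc i).pow 2).mul ((hv1.continuous).pow 2)) ?_
    exact (hcs_pd hφc i).mono (fun y hy => by
      simp only [Function.mem_support] at hy ⊢
      intro h0; exact hy (by simp [h0]))
  have intg3 : ∀ i : Fin 3, Integrable (fun x => pd (pd v i) i x * w x) := by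
    intro i
    refine Continuous.integrable_of_hasCompactSupport
      ((continuous_pd (hPv i) i).mul hwC.continuous) ?_
    exact hcs_mul_left hwc
  -- integration by parts + harmonicity
  have hibp : ∀ i : Fin 3, ∫ x, pd v i x * pd w i x = - ∫ x, pd (pd v i) i x * w x := by
    intro i
    have h : ∫ x, pd (pd v i) i x * w x = - ∫ x, pd v i x * pd w i x :=
      ibp (pd v i) w (hPv i) hwC hwc (EuclideanSpace.single i 1)
    linarith
  have hzero : ∑ i : Fin 3, ∫ x, pd v i x * pd w i x = 0 := by
    rw [Finset.sum_congr rfl (fun i _ => hibp i), Finset.sum_neg_distrib,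
      ← integral_finset_sum _ (fun i _ => intg3 i)]
    have : ∀ x : E3, (∑ i : Fin 3, pd (pd v i) i x * w x) = 0 := by
      intro x
      rw [← Finset.sum_mul, hlap x, zero_mul]
    simp [this]
  -- product rule
  have hpdw : ∀ (i : Fin 3) (x : E3),
      pd w i x = (φ x)^2 * pd v i x + (2 * φ x * pd φ i x) * v x := by
    intro i x
    have hsq : (fun y : E3 => (φ y)^2) = fun y => φ y * φ y := by
      funext y; ring
    have hφ2d : DifferentiableAt ℝ (fun y : E3 => (φ y)^2) x := (hφd x).pow 2
    have h1 : fderiv ℝ w x = (φ x)^2 • fderiv ℝ v x + v x • fderiv ℝ (fun y => (φ y)^2) x :=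
      fderiv_mul hφ2d (hvd x)
    have h2 : fderiv ℝ (fun y : E3 => (φ y)^2) x = φ x • fderiv ℝ φ x + φ x • fderiv ℝ φ x := by
      rw [hsq]; exact fderiv_mul (hφd x) (hφd x)
    show fderiv ℝ w x (EuclideanSpace.single i 1) = _
    rw [h1, h2]
    simp only [ContinuousLinearMap.add_apply, ContinuousLinearMap.smul_apply, smul_eq_mul]
    show (φ x)^2 * pd v i x + v x * (φ x * pd φ i x + φ x * pd φ i x) = _
    ring
  -- split the integral
  have hsplit : ∀ i : Fin 3, ∫ x, pd v i x * pd w i x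
      = (∫ x, (φ x)^2 * (pd v i x)^2) + ∫ x, (2 * φ x * pd φ i x) * (v x * pd v i x) := by
    intro i
    have : (fun x => pd v i x * pd w i x)
        = fun x => (φ x)^2 * (pd v i x)^2 + (2 * φ x * pd φ i x) * (v x * pd v i x) := by
      funext x; rw [hpdw i x]; ring
    rw [this, integral_add (intg1 i) (intg2 i)]
  -- pointwise quadratic bound
  have hbound : ∀ i : Fin 3, - ∫ x, (2 * φ x * pd φ i x) * (v x * pd v i x)
      ≤ (1/2) * (∫ x, (φ x)^2 * (pd v i x)^2) + 2 * ∫ x, (pd φ i x)^2 * (v x)^2 := by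
    intro i
    have h1 : - ∫ x, (2 * φ x * pd φ i x) * (v x * pd v i x)
        ≤ ∫ x, |(2 * φ x * pd φ i x) * (v x * pd v i x)| := by
      rw [← integral_neg]
      refine integral_mono (intg2 i).neg (intg2 i).abs (fun x => ?_)
      exact neg_le_abs _
    have h2 : ∫ x, |(2 * φ x * pd φ i x) * (v x * pd v i x)|
        ≤ ∫ x, ((1/2) * ((φ x)^2 * (pd v i x)^2) + 2 * ((pd φ i x)^2 * (v x)^2)) := by
      refine integral_mono (intg2 i).abs
        (((intg1 i).const_mul _).add ((intgD i).const_mul _)) (fun x => ?_)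
      have ha := sq_nonneg (φ x * pd v i x - 2 * (pd φ i x * v x))
      have hb := sq_nonneg (φ x * pd v i x + 2 * (pd φ i x * v x))
      rw [abs_le]
      constructor <;> nlinarith [ha, hb]
    calc - ∫ x, (2 * φ x * pd φ i x) * (v x * pd v i x)
        ≤ ∫ x, |(2 * φ x * pd φ i x) * (v x * pd v i x)| := h1
      _ ≤ ∫ x, ((1/2) * ((φ x)^2 * (pd v i x)^2) + 2 * ((pd φ i x)^2 * (v x)^2)) := h2
      _ = (1/2) * (∫ x, (φ x)^2 * (pd v i x)^2) + 2 * ∫ x, (pd φ i x)^2 * (v x)^2 := by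
          rw [integral_add ((intg1 i).const_mul _) ((intgD i).const_mul _),
            integral_const_mul, integral_const_mul]
  -- combine
  have hS : ∑ i : Fin 3, ∫ x, (φ x)^2 * (pd v i x)^2
      = ∑ i : Fin 3, - ∫ x, (2 * φ x * pd φ i x) * (v x * pd v i x) := by
    have := hzero
    rw [Finset.sum_congr rfl (fun i _ => hsplit i), Finset.sum_add_distrib] at this
    rw [Finset.sum_neg_distrib]
    linarith
  rw [hS]
  have hfin : ∑ i : Fin 3, - ∫ x, (2 * φ x * pd φ i x) * (v x * pd v i x)
      ≤ ∑ i : Fin 3, ((1/2) * (∫ x, (φ x)^2 * (pd v i x)^2)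
        + 2 * ∫ x, (pd φ i x)^2 * (v x)^2) :=
    Finset.sum_le_sum (fun i _ => hbound i)
  rw [Finset.sum_add_distrib, ← Finset.mul_sum, ← Finset.mul_sum] at hfin
  have := hS
  linarith

lemma deriv_st_eq_zero {t : ℝ} (ht : t < 0 ∨ 1 < t) : deriv Real.smoothTransition t = 0 := by
  rcases ht with ht | ht
  · have h : Real.smoothTransition =ᶠ[nhds t] fun _ => (0:ℝ) := by
      filter_upwards [Iio_mem_nhds ht] with s hs
      exact Real.smoothTransition.zero_of_nonpos (le_of_lt hs)
    rw [h.deriv_eq]; exact deriv_const t 0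
  · have h : Real.smoothTransition =ᶠ[nhds t] fun _ => (1:ℝ) := by
      filter_upwards [Ioi_mem_nhds ht] with s hs
      exact Real.smoothTransition.one_of_one_le (le_of_lt hs)
    rw [h.deriv_eq]; exact deriv_const t 1

lemma exists_bound_deriv_st : ∃ M : ℝ, 0 ≤ M ∧ ∀ t, |deriv Real.smoothTransition t| ≤ M := by
  have hc : HasCompactSupport (deriv Real.smoothTransition) := by
    refine HasCompactSupport.intro (isCompact_Icc (a := (0:ℝ)) (b := 1)) ?_
    intro t ht
    simp only [Set.mem_Icc, not_and_or, not_le] at ht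
    exact deriv_st_eq_zero (by tauto)
  obtain ⟨M, hM⟩ := hc.exists_bound_of_continuous
    ((Real.smoothTransition.contDiff (n := 1)).continuous_deriv le_rfl)
  refine ⟨M, le_trans (norm_nonneg _) (hM 0), fun t => ?_⟩
  simpa [Real.norm_eq_abs] using hM t

/-- A smooth cutoff equal to `1` on the ball of radius `R` with derivative bound `2M/R`. -/
lemma exists_cutoff (M : ℝ) (hM0 : 0 ≤ M) (hM : ∀ t, |deriv Real.smoothTransition t| ≤ M)
    (R : ℝ) (hR : 0 < R) :
    ∃ φ : EuclideanSpace ℝ (Fin 3) → ℝ, ContDiff ℝ 1 φ ∧ HasCompactSupport φ ∧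
      (∀ x : E3, ‖x‖ ≤ R → φ x = 1) ∧
      (∀ (i : Fin 3) (x : E3), |pd φ i x| ≤ 2 * M / R) := by
  set q : E3 → ℝ := fun y => (4 - (inner ℝ y y : ℝ) / R ^ 2) / 3 with hq
  have hinner_eq : ∀ y : E3, (inner ℝ y y : ℝ) = ‖y‖ ^ 2 := fun y => real_inner_self_eq_norm_sq y
  have hqC : ContDiff ℝ 1 q := by
    have h1 : ContDiff ℝ 1 (fun y : E3 => (inner ℝ y y : ℝ)) :=
      (contDiff_id.inner ℝ contDiff_id)
    exact ((contDiff_const.sub (h1.div_const _)).div_const _)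
  refine ⟨fun y => Real.smoothTransition (q y), ?_, ?_, ?_, ?_⟩
  · exact (Real.smoothTransition.contDiff (n := 1)).comp hqC
  · refine HasCompactSupport.intro (isCompact_closedBall (0:E3) (2*R)) ?_
    intro x hx
    have hxn : 2 * R < ‖x‖ := by
      simpa [Metric.mem_closedBall, dist_zero_right] using hx
    have hq0 : q x ≤ 0 := by
      have h1 : (inner ℝ x x : ℝ) = ‖x‖ ^ 2 := hinner_eq x
      have h2 : 4 ≤ ‖x‖ ^ 2 / R ^ 2 := by
        rw [le_div_iff₀ (by positivity)]; nlinarith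
      rw [hq]; dsimp only; rw [h1]; linarith
    exact Real.smoothTransition.zero_of_nonpos hq0
  · intro x hx
    refine Real.smoothTransition.one_of_one_le ?_
    have h1 : (inner ℝ x x : ℝ) = ‖x‖ ^ 2 := hinner_eq x
    have h2 : ‖x‖^2 ≤ R^2 := by nlinarith [norm_nonneg x]
    have h3 : ‖x‖^2 / R^2 ≤ 1 := by
      rw [div_le_one (by positivity)]; exact h2
    rw [hq]; dsimp only; rw [h1]
    linarith
  · intro i x
    -- compute the derivative
    have hin : HasFDerivAt (fun y : E3 => (inner ℝ y y : ℝ))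
        ((fderivInnerCLM ℝ ((x : E3), x)).comp
          ((ContinuousLinearMap.id ℝ E3).prod (ContinuousLinearMap.id ℝ E3))) x :=
      (hasFDerivAt_id x).inner ℝ (hasFDerivAt_id x)
    set J := (fderivInnerCLM ℝ ((x : E3), x)).comp
        ((ContinuousLinearMap.id ℝ E3).prod (ContinuousLinearMap.id ℝ E3)) with hJ
    have hq' : HasFDerivAt q ((-(1/(3 * R ^ 2))) • J) x := by
      have h1 : HasFDerivAt (fun y : E3 => 4/3 - (3*R^2)⁻¹ * (inner ℝ y y : ℝ))
          ((0 : E3 →L[ℝ] ℝ) - (3*R^2)⁻¹ • J) x :=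
        (hasFDerivAt_const ((4:ℝ)/3) x).sub (hin.const_mul _)
      have h2 : q = fun y : E3 => 4/3 - (3*R^2)⁻¹ * (inner ℝ y y : ℝ) := by
        funext y; rw [hq]; ring
      rw [h2]
      refine h1.congr_fderiv ?_
      ext y
      simp only [ContinuousLinearMap.smul_apply, smul_eq_mul, ContinuousLinearMap.sub_apply,
        ContinuousLinearMap.zero_apply]
      ring
    have hst : HasDerivAt Real.smoothTransition (deriv Real.smoothTransition (q x)) (q x) :=
      (((Real.smoothTransition.contDiff (n := 1)).differentiable (by simp)) (q x)).hasDerivAt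
    have hφ' : HasFDerivAt (fun y => Real.smoothTransition (q y))
        ((deriv Real.smoothTransition (q x)) • ((-(1/(3 * R ^ 2))) • J)) x :=
      hst.comp_hasFDerivAt x hq'
    have hval : pd (fun y => Real.smoothTransition (q y)) i x
        = deriv Real.smoothTransition (q x)
          * (-(1/(3 * R ^ 2)) * J (EuclideanSpace.single i 1)) := by
      show fderiv ℝ (fun y => Real.smoothTransition (q y)) x (EuclideanSpace.single i 1) = _
      rw [hφ'.fderiv]
      simp [mul_assoc]
    have hJval : |J (EuclideanSpace.single i 1)| ≤ 2 * ‖x‖ := by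
      have : J (EuclideanSpace.single i 1)
          = (inner ℝ x (EuclideanSpace.single i 1) : ℝ)
            + (inner ℝ (EuclideanSpace.single i 1) x : ℝ) := by
        rw [hJ]
        simp [fderivInnerCLM_apply]
      rw [this]
      have h1 : |(inner ℝ x (EuclideanSpace.single i 1) : ℝ)| ≤ ‖x‖ := by
        refine le_trans (abs_real_inner_le_norm _ _) ?_
        rw [EuclideanSpace.norm_single]
        simp
      have h2 : |(inner ℝ (EuclideanSpace.single i 1) x : ℝ)| ≤ ‖x‖ := by
        refine le_trans (abs_real_inner_le_norm _ _) ?_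
        rw [EuclideanSpace.norm_single]
        simp
      calc |(inner ℝ x (EuclideanSpace.single i 1) : ℝ)
            + (inner ℝ (EuclideanSpace.single i 1) x : ℝ)|
          ≤ _ + _ := abs_add_le _ _
        _ ≤ ‖x‖ + ‖x‖ := add_le_add h1 h2
        _ = 2 * ‖x‖ := by ring
    by_cases hxn : ‖x‖ ≤ 2 * R
    · rw [hval, abs_mul, abs_mul, abs_neg, abs_div, abs_one]
      have hd := hM (q x)
      have h1 : |deriv Real.smoothTransition (q x)|
          * (1 / |3 * R^2| * |J (EuclideanSpace.single i 1)|)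
          ≤ M * (1 / (3 * R^2) * (2 * (2 * R))) := by
        have hpos : |3 * R^2| = 3 * R^2 := abs_of_pos (by positivity)
        rw [hpos]
        have hJ2 : |J (EuclideanSpace.single i 1)| ≤ 2 * (2 * R) := by
          refine le_trans hJval ?_; nlinarith
        have hnn : (0:ℝ) ≤ 1 / (3 * R^2) := by positivity
        refine mul_le_mul hd ?_ (by positivity) hM0
        exact mul_le_mul_of_nonneg_left hJ2 hnn
      refine le_trans h1 ?_
      rw [le_div_iff₀ hR]
      have he : M * (1 / (3 * R ^ 2) * (2 * (2 * R))) * R = (4/3) * M := by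
        field_simp; ring
      rw [he]; linarith
    · push_neg at hxn
      have hq0 : q x < 0 := by
        have h1 : (inner ℝ x x : ℝ) = ‖x‖ ^ 2 := hinner_eq x
        rw [hq]; dsimp only; rw [h1]
        have h4 : 4 < ‖x‖^2 / R^2 := by
          rw [lt_div_iff₀ (by positivity)]; nlinarith
        linarith
      rw [hval, deriv_st_eq_zero (Or.inl hq0), zero_mul, abs_zero]
      positivity

lemma fderiv_eq_zero_of_pd {f : E3 → ℝ}
    (h : ∀ (i : Fin 3) (x : E3), pd f i x = 0) (x : E3) : fderiv ℝ f x = 0 := by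
  apply ContinuousLinearMap.coe_injective
  refine Module.Basis.ext (EuclideanSpace.basisFun (Fin 3) ℝ).toBasis (fun i => ?_)
  simp only [OrthonormalBasis.coe_toBasis, EuclideanSpace.basisFun_apply,
    ContinuousLinearMap.coe_coe, ContinuousLinearMap.coe_zero, LinearMap.zero_apply]
  exact h i x

end Aux

/-- Every harmonic function `v : ℝ³ → ℝ` that is square integrable over `ℝ³`
vanishes identically. -/
theorem stmt3 (v : EuclideanSpace ℝ (Fin 3) → ℝ) (hv : Harmonic v)
    (hL2 : Integrable (fun x => (v x) ^ 2)) :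
    ∀ x, v x = 0 := by
  obtain ⟨hv2, hlap⟩ := hv
  obtain ⟨M, hM0, hM⟩ := exists_bound_deriv_st
  set I := ∫ x : EuclideanSpace ℝ (Fin 3), (v x)^2 with hI
  have hI0 : 0 ≤ I := integral_nonneg (fun x => sq_nonneg _)
  have hpd0 : ∀ (i : Fin 3) (x : EuclideanSpace ℝ (Fin 3)), pd v i x = 0 := by
    by_contra hcon
    push_neg at hcon
    obtain ⟨i, x₀, hx₀⟩ := hcon
    have hpc : Continuous (fun x => (pd v i x)^2) := ((contDiff_pd hv2 i).continuous).pow 2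
    set ε := (pd v i x₀)^2 / 2 with hε
    have hε0 : 0 < ε := by
      have h0 : 0 < (pd v i x₀)^2 := by positivity
      rw [hε]; linarith
    obtain ⟨δ, hδ0, hδ⟩ := Metric.continuousAt_iff.mp hpc.continuousAt ε hε0
    set s := Metric.closedBall x₀ (δ/2) with hs
    have hsmeas : MeasurableSet s := measurableSet_closedBall
    have hsfin : volume s ≠ ⊤ := (measure_closedBall_lt_top).ne
    have hslb : ∀ x ∈ s, ε ≤ (pd v i x)^2 := by
      intro x hx
      have hd : dist x x₀ ≤ δ/2 := Metric.mem_closedBall.mp hx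
      have h1 : dist ((pd v i x)^2) ((pd v i x₀)^2) < ε := hδ (lt_of_le_of_lt hd (by linarith))
      rw [Real.dist_eq, abs_lt] at h1
      have h2 : (pd v i x₀)^2 = 2 * ε := by rw [hε]; ring
      linarith [h1.1]
    set c := ε * (volume s).toReal with hc
    have hc0 : 0 < c := by
      refine mul_pos hε0 ?_
      have h1 := Metric.measure_closedBall_pos volume x₀ (half_pos hδ0)
      exact ENNReal.toReal_pos h1.ne' hsfin
    set z := 48 * M^2 * I / c with hz
    have hz0 : 0 ≤ z := by positivity
    set R := max (‖x₀‖ + δ/2) (Real.sqrt z + 1) with hR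
    have hR1 : Real.sqrt z + 1 ≤ R := le_max_right _ _
    have hR0 : 0 < R := lt_of_lt_of_le (by positivity) hR1
    obtain ⟨φ, hφC, hφc, hφ1, hφd⟩ := exists_cutoff M hM0 hM R hR0
    have hcacc := caccioppoli v hv2 hlap φ hφC hφc
    have hDle : ∀ j : Fin 3, ∫ x, (pd φ j x)^2 * (v x)^2 ≤ (2*M/R)^2 * I := by
      intro j
      have hint1 : Integrable (fun x => (pd φ j x)^2 * (v x)^2) :=
        Continuous.integrable_of_hasCompactSupport
          (((continuous_pd hφC j).pow 2).mul ((hv2.continuous).pow 2))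
          ((hcs_pd hφc j).mono (fun y hy => by
            simp only [Function.mem_support] at hy ⊢
            intro h0; exact hy (by simp [h0])))
      have h1 : ∫ x, (pd φ j x)^2 * (v x)^2 ≤ ∫ x, (2*M/R)^2 * (v x)^2 := by
        refine integral_mono hint1 (hL2.const_mul _) (fun x => ?_)
        refine mul_le_mul_of_nonneg_right ?_ (sq_nonneg _)
        have hb := hφd j x
        rw [abs_le] at hb
        exact sq_le_sq' hb.1 hb.2
      rw [integral_const_mul] at h1
      exact h1
    have hA1 : Integrable (fun x => (φ x)^2 * (pd v i x)^2) :=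
      Continuous.integrable_of_hasCompactSupport
        (((hφC.continuous).pow 2).mul (((contDiff_pd hv2 i).continuous).pow 2))
        (hφc.mono (fun y hy => by
          simp only [Function.mem_support] at hy ⊢
          intro h0; exact hy (by simp [h0])))
    have hlow : c ≤ ∫ x, (φ x)^2 * (pd v i x)^2 := by
      have h1 : c ≤ ∫ x in s, (φ x)^2 * (pd v i x)^2 := by
        refine (le_of_eq (show c = ε * volume.real s from rfl)).trans
          (setIntegral_ge_of_const_le_real hsmeas hsfin (fun x hx => ?_) hA1.integrableOn)
        have hd : dist x x₀ ≤ δ/2 := Metric.mem_closedBall.mp hx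
        have hxn : ‖x‖ ≤ R := by
          have h2 : ‖x‖ - ‖x₀‖ ≤ ‖x - x₀‖ := norm_sub_norm_le _ _
          have h3 : ‖x - x₀‖ = dist x x₀ := (dist_eq_norm _ _).symm
          have h4 : ‖x₀‖ + δ/2 ≤ R := le_max_left _ _
          linarith
        rw [hφ1 x hxn]
        simpa using hslb x hx
      refine le_trans h1 (setIntegral_le_integral hA1 (.of_forall fun x => by positivity))
    have hup : c ≤ 4 * (3 * ((2*M/R)^2 * I)) := by
      have h2 : ∫ x, (φ x)^2 * (pd v i x)^2 ≤ ∑ j : Fin 3, ∫ x, (φ x)^2 * (pd v j x)^2 :=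
        Finset.single_le_sum
          (f := fun j : Fin 3 => ∫ x, (φ x)^2 * (pd v j x)^2)
          (fun j _ => integral_nonneg fun x => by positivity) (Finset.mem_univ i)
      have h3 : ∑ j : Fin 3, ∫ x, (pd φ j x)^2 * (v x)^2 ≤ 3 * ((2*M/R)^2 * I) := by
        calc ∑ j : Fin 3, ∫ x, (pd φ j x)^2 * (v x)^2
            ≤ ∑ _j : Fin 3, (2*M/R)^2 * I := Finset.sum_le_sum fun j _ => hDle j
          _ = 3 * ((2*M/R)^2 * I) := by
              rw [Finset.sum_const]
              simp
      linarith
    have h4 : (4:ℝ) * (3 * ((2*M/R)^2 * I)) = 48 * M^2 * I / R^2 := by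
      field_simp; ring
    have hfinal : c ≤ 48 * M^2 * I / R^2 := by rw [← h4]; exact hup
    have h5 : c * R^2 ≤ 48 * M^2 * I := (le_div_iff₀ (by positivity)).mp hfinal
    have hsq : Real.sqrt z ^ 2 = z := Real.sq_sqrt hz0
    have hs0 : 0 ≤ Real.sqrt z := Real.sqrt_nonneg z
    have hR2 : z + 1 ≤ R^2 := by nlinarith
    have hzc : z * c = 48 * M^2 * I := by rw [hz]; field_simp
    have h6 : c * (z+1) ≤ c * R^2 := mul_le_mul_of_nonneg_left hR2 hc0.le
    nlinarith [h5, h6, hzc, hc0]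
  have hdiff : Differentiable ℝ v := hv2.differentiable (by simp)
  have hfz : ∀ x, fderiv ℝ v x = 0 := fderiv_eq_zero_of_pd hpd0
  have hconst := is_const_of_fderiv_eq_zero hdiff hfz
  intro x
  have hint : Integrable (fun _ : EuclideanSpace ℝ (Fin 3) => (v x)^2) :=
    hL2.congr (.of_forall fun y => by show v y ^ 2 = v x ^ 2; rw [hconst y x])
  rw [integrable_const_iff] at hint
  rcases hint with h | h
  · exact pow_eq_zero_iff (n := 2) (by norm_num) |>.mp h
  · exact absurd (measure_lt_top (volume : Measure (EuclideanSpace ℝ (Fin 3))) Set.univ) (by simp [MeasureTheory.measure_univ_of_isAddLeftInvariant])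
end

section
/- Let ν̂ : [0,∞) → ℝ and ν > 0 satisfy the strong monotonicity property (ν̂(s)s − ν̂(t)t)(s − t) ≥ ν (s − t)² for all s, t ≥ 0. Then the radial vector field a : ℝ³ → ℝ³, a(y) = ν̂(‖y‖) y, is strongly monotone with the same constant: ⟨a(x) − a(y), x − y⟩ ≥ ν ‖x − y‖² for all x, y ∈ ℝ³, where ⟨·,·⟩ and ‖·‖ are the Euclidean inner product and norm on ℝ³. -/
private lemma key_real (ν' : ℝ → ℝ) (ν : ℝ) (hν : 0 < ν)
    (hmon : ∀ s t : ℝ, 0 ≤ s → 0 ≤ t →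
      (ν' s * s - ν' t * t) * (s - t) ≥ ν * (s - t) ^ 2)
    (s t p : ℝ) (hs0 : 0 ≤ s) (ht0 : 0 ≤ t) (hp : p ≤ s * t) (hp2 : -(s * t) ≤ p) :
    ν' s * s ^ 2 + ν' t * t ^ 2 - (ν' s + ν' t) * p ≥ ν * (s ^ 2 - 2 * p + t ^ 2) := by
  have h1 := hmon s t hs0 ht0
  have h2 := hmon s 0 hs0 le_rfl
  have h3 := hmon t 0 ht0 le_rfl
  rcases eq_or_lt_of_le hs0 with hs' | hs'
  · have hst : s * t = 0 := by rw [← hs']; ring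
    have hp0 : p = 0 := le_antisymm (hst ▸ hp) (by linarith [hst ▸ hp2])
    subst hp0
    nlinarith [h3]
  rcases eq_or_lt_of_le ht0 with ht' | ht'
  · have hst : s * t = 0 := by rw [← ht']; ring
    have hp0 : p = 0 := le_antisymm (hst ▸ hp) (by linarith [hst ▸ hp2])
    subst hp0
    nlinarith [h2]
  have hνs : ν ≤ ν' s := by nlinarith [mul_pos hs' hs']
  have hνt : ν ≤ ν' t := by nlinarith [mul_pos ht' ht']
  nlinarith [mul_nonneg (sub_nonneg.2 hνs) (sub_nonneg.2 hp),
    mul_nonneg (sub_nonneg.2 hνt) (sub_nonneg.2 hp), h1]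

/-- If `s ↦ ν̂(s)s` is strongly monotone on `[0,∞)` with constant `ν > 0`, then the
radial vector field `a(y) = ν̂(‖y‖) y` on `ℝ³` is strongly monotone with the same
constant: `⟨a(x) − a(y), x − y⟩ ≥ ν ‖x − y‖²`. -/
theorem stmt8 (ν' : ℝ → ℝ) (ν : ℝ) (hν : 0 < ν)
    (hmon : ∀ s t : ℝ, 0 ≤ s → 0 ≤ t →
      (ν' s * s - ν' t * t) * (s - t) ≥ ν * (s - t) ^ 2) :
    ∀ x y : EuclideanSpace ℝ (Fin 3),
      (inner ℝ ((ν' ‖x‖) • x - (ν' ‖y‖) • y) (x - y) : ℝ) ≥ ν * ‖x - y‖ ^ 2 := by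
  intro x y
  have hxx : (inner ℝ x x : ℝ) = ‖x‖ ^ 2 := real_inner_self_eq_norm_sq x
  have hyy : (inner ℝ y y : ℝ) = ‖y‖ ^ 2 := real_inner_self_eq_norm_sq y
  have hsym : (inner ℝ y x : ℝ) = inner ℝ x y := real_inner_comm x y
  have hnorm : ‖x - y‖ ^ 2 = ‖x‖ ^ 2 - 2 * inner ℝ x y + ‖y‖ ^ 2 := by
    rw [norm_sub_sq_real]
  have hexp : (inner ℝ ((ν' ‖x‖) • x - (ν' ‖y‖) • y) (x - y) : ℝ)
      = ν' ‖x‖ * ‖x‖ ^ 2 + ν' ‖y‖ * ‖y‖ ^ 2 - (ν' ‖x‖ + ν' ‖y‖) * inner ℝ x y := by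
    simp only [inner_sub_left, inner_sub_right, real_inner_smul_left]
    rw [hxx, hyy, hsym]; ring
  rw [hexp, hnorm]
  exact key_real ν' ν hν hmon ‖x‖ ‖y‖ (inner ℝ x y) (norm_nonneg x) (norm_nonneg y)
    (real_inner_le_norm x y) (neg_le_of_abs_le (abs_real_inner_le_norm x y))
end

section
/- Let ν̂ : [0,∞) → [0,∞) and ν̄ > 0 satisfy the Lipschitz property |ν̂(s)s − ν̂(t)t| ≤ ν̄ |s − t| for all s, t ≥ 0. Then the radial vector field a : ℝ³ → ℝ³, a(y) = ν̂(‖y‖) y, is Lipschitz continuous with constant 3ν̄: ‖a(x) − a(y)‖ ≤ 3ν̄ ‖x − y‖ for all x, y ∈ ℝ³, where ‖·‖ is the Euclidean norm on ℝ³. -/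
/-!
Write `a(y) = ν̂(‖y‖) y` and `g(s) = ν̂(s) s`, so `g(0) = 0` and `g` is `ν̄`-Lipschitz on `[0, ∞)`.
Comparing with `g(0)` gives `‖a(y)‖ ≤ ν̄ ‖y‖` and `|ν̂(s)| ≤ ν̄` for `s > 0`. When `‖x‖ ≠ 0` split
`a(x) − a(y) = ν̂(‖x‖)(x − y) + (ν̂(‖x‖) − ν̂(‖y‖)) y`: the first term costs `ν̄ ‖x − y‖`, and
`(ν̂(‖x‖) − ν̂(‖y‖)) ‖y‖ = ν̂(‖x‖)(‖y‖ − ‖x‖) + g(‖x‖) − g(‖y‖)` costs `2ν̄ ‖x − y‖`.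
-/

namespace RadialField

variable {E : Type*} [SeminormedAddCommGroup E] [NormedSpace ℝ E] {f : ℝ → ℝ} {L : ℝ}
  (hf : ∀ s t : ℝ, 0 ≤ s → 0 ≤ t → |f s * s - f t * t| ≤ L * |s - t|)
include hf

theorem nonneg_of_lipschitz : 0 ≤ L := by
  simpa using (abs_nonneg _).trans (hf 1 0 zero_le_one le_rfl)

theorem abs_le_of_lipschitz {s : ℝ} (hs : 0 < s) : |f s| ≤ L := by
  have h := hf s 0 hs.le le_rfl
  rw [mul_zero, sub_zero, sub_zero, abs_mul, abs_of_pos hs] at h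
  exact le_of_mul_le_mul_right h hs

theorem abs_sub_mul_le_of_lipschitz {s t : ℝ} (hs : 0 < s) (ht : 0 ≤ t) :
    |f s - f t| * t ≤ 2 * L * |s - t| :=
  calc |f s - f t| * t = |f s * (t - s) + (f s * s - f t * t)| := by
        rw [← abs_of_nonneg ht, ← abs_mul, abs_of_nonneg ht]
        ring_nf
    _ ≤ |f s| * |t - s| + L * |s - t| := by
        grw [abs_add_le, abs_mul, hf s t hs.le ht]
    _ ≤ 2 * L * |s - t| := by
        grw [abs_sub_comm t s, abs_le_of_lipschitz hf hs]
        linarith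

theorem norm_smul_le_of_lipschitz (y : E) : ‖f ‖y‖ • y‖ ≤ L * ‖y‖ := by
  simpa [norm_smul] using hf ‖y‖ 0 (norm_nonneg y) le_rfl

theorem norm_smul_sub_smul_le_of_lipschitz (x y : E) :
    ‖f ‖x‖ • x - f ‖y‖ • y‖ ≤ 3 * L * ‖x - y‖ := by
  have hL := nonneg_of_lipschitz hf
  rcases eq_or_ne ‖x‖ 0 with hx | hx
  · have hxy : ‖y‖ ≤ ‖x - y‖ := by simpa [hx, norm_sub_rev] using norm_sub_norm_le y x
    calc ‖f ‖x‖ • x - f ‖y‖ • y‖ ≤ ‖f ‖x‖ • x‖ + ‖f ‖y‖ • y‖ := norm_sub_le _ _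
      _ ≤ L * ‖x‖ + L * ‖y‖ :=
          add_le_add (norm_smul_le_of_lipschitz hf x) (norm_smul_le_of_lipschitz hf y)
      _ ≤ 3 * L * ‖x - y‖ := by
          rw [hx]
          nlinarith [mul_le_mul_of_nonneg_left hxy hL, norm_nonneg (x - y)]
  have hx₀ : 0 < ‖x‖ := (norm_nonneg x).lt_of_ne' hx
  have hfx := abs_le_of_lipschitz hf hx₀
  have hnorm : |‖x‖ - ‖y‖| ≤ ‖x - y‖ := abs_norm_sub_norm_le x y
  have h₁ : ‖f ‖x‖ • (x - y)‖ ≤ L * ‖x - y‖ := by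
    rw [norm_smul, Real.norm_eq_abs]
    gcongr
  have h₂ : ‖(f ‖x‖ - f ‖y‖) • y‖ ≤ 2 * L * ‖x - y‖ := by
    rw [norm_smul, Real.norm_eq_abs]
    grw [abs_sub_mul_le_of_lipschitz hf hx₀ (norm_nonneg y), hnorm]
  calc ‖f ‖x‖ • x - f ‖y‖ • y‖ = ‖f ‖x‖ • (x - y) + (f ‖x‖ - f ‖y‖) • y‖ := by
        rw [smul_sub, sub_smul, sub_add_sub_cancel]
    _ ≤ ‖f ‖x‖ • (x - y)‖ + ‖(f ‖x‖ - f ‖y‖) • y‖ := norm_add_le _ _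
    _ ≤ 3 * L * ‖x - y‖ := by linarith

end RadialField

theorem stmt9_general (ν' : ℝ → ℝ) (νbar : ℝ)
    (hlip : ∀ s t : ℝ, 0 ≤ s → 0 ≤ t → |ν' s * s - ν' t * t| ≤ νbar * |s - t|) :
    ∀ x y : EuclideanSpace ℝ (Fin 3),
      ‖(ν' ‖x‖) • x - (ν' ‖y‖) • y‖ ≤ 3 * νbar * ‖x - y‖ :=
  RadialField.norm_smul_sub_smul_le_of_lipschitz hlip

/-- If `ν̂ : [0,∞) → [0,∞)` and `s ↦ ν̂(s)s` is Lipschitz with constant `ν̄ > 0`, then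
the radial vector field `a(y) = ν̂(‖y‖) y` on `ℝ³` is Lipschitz with constant `3ν̄`:
`‖a(x) − a(y)‖ ≤ 3ν̄ ‖x − y‖`. Here `νbar` plays the role of `ν̄`. -/
theorem stmt9 (ν' : ℝ → ℝ) (νbar : ℝ) (hνbar : 0 < νbar)
    (hpos : ∀ s : ℝ, 0 ≤ s → 0 ≤ ν' s)
    (hlip : ∀ s t : ℝ, 0 ≤ s → 0 ≤ t → |ν' s * s - ν' t * t| ≤ νbar * |s - t|) :
    ∀ x y : EuclideanSpace ℝ (Fin 3),
      ‖(ν' ‖x‖) • x - (ν' ‖y‖) • y‖ ≤ 3 * νbar * ‖x - y‖ :=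
  stmt9_general ν' νbar hlip
end

section
/- Define the constants ν₀ = 10⁷/(4π), q₁ = 200, q₂ = 1/1000, and ν̂(s) = ν₀ − (ν₀ − q₁)·exp(−q₂ s⁶). Then the map s ↦ ν̂(s)s is strongly monotone on [0,∞) with constant q₁: for all s, t ≥ 0, (ν̂(s)s − ν̂(t)t)(s − t) ≥ q₁ (s − t)². -/
/-!
Strong monotonicity with constant `q₁` amounts to monotonicity of `s ↦ ν̂(s) s - q₁ s`, which equals
`(ν₀ - q₁) · s (1 - exp(-q₂ s⁶))`. Here `ν₀ ≥ q₁`, and on `[0, ∞)` the map `s ↦ s (1 - exp(-q₂ s⁶))` is a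
product of two nonnegative nondecreasing factors.
-/

/-- `ν₀ = 10⁷/(4π)`. -/
noncomputable def ν₀ : ℝ := 10 ^ 7 / (4 * Real.pi)

/-- `q₁ = 200`. -/
def q₁ : ℝ := 200

/-- `q₂ = 1/1000`. -/
noncomputable def q₂ : ℝ := 1 / 1000

/-- The reluctivity function `ν̂(s) = ν₀ − (ν₀ − q₁) exp(−q₂ s⁶)`. -/
noncomputable def ν' (s : ℝ) : ℝ := ν₀ - (ν₀ - q₁) * Real.exp (-q₂ * s ^ 6)

open Real Set

lemma sq_mul_le_sub_mul_sub_of_monotoneOn_sub {f : ℝ → ℝ} {c : ℝ} {S : Set ℝ}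
    (hf : MonotoneOn (fun x ↦ f x - c * x) S) {s t : ℝ} (hs : s ∈ S) (ht : t ∈ S) :
    c * (s - t) ^ 2 ≤ (f s - f t) * (s - t) := by
  rcases le_total t s with hts | hst
  · have := hf ht hs hts
    nlinarith
  · have := hf hs ht hst
    nlinarith

lemma monotoneOn_mul_one_sub_exp_neg_mul_pow {a : ℝ} (ha : 0 ≤ a) (n : ℕ) :
    MonotoneOn (fun s ↦ s * (1 - exp (-a * s ^ n))) (Ici 0) := by
  intro t (ht : 0 ≤ t) s (hs : 0 ≤ s) hts
  have hpow : t ^ n ≤ s ^ n := pow_le_pow_left₀ ht hts n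
  have hexp : exp (-a * s ^ n) ≤ exp (-a * t ^ n) := exp_le_exp.mpr (by nlinarith)
  have hexp_le_one : exp (-a * t ^ n) ≤ 1 :=
    exp_le_one_iff.mpr (by nlinarith [pow_nonneg ht n])
  exact mul_le_mul hts (by linarith) (by linarith) hs

lemma q₁_le_ν₀ : q₁ ≤ ν₀ := by
  rw [q₁, ν₀, le_div_iff₀ (by positivity)]
  nlinarith [pi_le_four]

lemma ν'_mul_sub_q₁_mul (s : ℝ) :
    ν' s * s - q₁ * s = (ν₀ - q₁) * (s * (1 - exp (-q₂ * s ^ 6))) := by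
  rw [ν']
  ring

lemma monotoneOn_ν'_mul_sub_q₁_mul : MonotoneOn (fun s ↦ ν' s * s - q₁ * s) (Ici 0) := by
  simp only [ν'_mul_sub_q₁_mul]
  intro t ht s hs hts
  exact mul_le_mul_of_nonneg_left
    (monotoneOn_mul_one_sub_exp_neg_mul_pow (by norm_num [q₂]) 6 ht hs hts)
    (sub_nonneg.mpr q₁_le_ν₀)

/-- The map `s ↦ ν̂(s)s` is strongly monotone on `[0,∞)` with constant `q₁`. -/
theorem stmt11 : ∀ s t : ℝ, 0 ≤ s → 0 ≤ t →
    (ν' s * s - ν' t * t) * (s - t) ≥ q₁ * (s - t) ^ 2 := fun _ _ hs ht ↦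
  sq_mul_le_sub_mul_sub_of_monotoneOn_sub monotoneOn_ν'_mul_sub_q₁_mul hs ht
end

section
/- Define the constants ν₀ = 10⁷/(4π), q₁ = 200, q₂ = 1/1000, and ν̂(s) = ν₀ − (ν₀ − q₁)·exp(−q₂ s⁶). Then the map s ↦ ν̂(s)s is Lipschitz continuous on [0,∞): for all s, t ≥ 0, |ν̂(s)s − ν̂(t)t| ≤ (ν₀ + 6(ν₀ − q₁)/e) |s − t|, where e is Euler's number. -/
lemma nu0_ge : (625000 : ℝ) ≤ ν₀ := by
  have hpos : 0 < 4 * Real.pi := by positivity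
  rw [ν₀, le_div_iff₀ hpos]
  nlinarith [Real.pi_le_four]

lemma ue_le : ∀ u : ℝ, 0 ≤ u → u * Real.exp (-u) ≤ (Real.exp 1)⁻¹ := by
  intro u hu
  have h : u ≤ Real.exp (u - 1) := by
    have := Real.add_one_le_exp (u - 1)
    linarith
  calc u * Real.exp (-u) ≤ Real.exp (u - 1) * Real.exp (-u) := by
        apply mul_le_mul_of_nonneg_right h (Real.exp_nonneg _)
    _ = (Real.exp 1)⁻¹ := by
        rw [← Real.exp_add, ← Real.exp_neg]; ring_nf

/-- The map `s ↦ ν̂(s)s` is Lipschitz continuous on `[0,∞)` with constant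
`ν₀ + 6(ν₀ − q₁)/e`. -/
theorem stmt12 : ∀ s t : ℝ, 0 ≤ s → 0 ≤ t →
    |ν' s * s - ν' t * t| ≤ (ν₀ + 6 * (ν₀ - q₁) / Real.exp 1) * |s - t| := by
  intro s t hs ht
  have hq1 : ν₀ - (ν₀ - q₁) = 200 := by rw [q₁]; ring
  have hc : (0:ℝ) ≤ ν₀ - q₁ := by have := nu0_ge; rw [q₁]; linarith
  set c : ℝ := ν₀ - q₁ with hcdef
  set F' : ℝ → ℝ := fun x =>
    ν₀ - c * Real.exp (-q₂ * x ^ 6) + 6 * c * (q₂ * x ^ 6) * Real.exp (-q₂ * x ^ 6) with hF'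
  have hderiv : ∀ x ∈ Set.Ici (0:ℝ),
      HasDerivWithinAt (fun x => ν' x * x) (F' x) (Set.Ici 0) x := by
    intro x _
    have h1 : HasDerivAt (fun x : ℝ => -q₂ * x ^ 6) (-q₂ * (6 * x ^ 5)) x := by
      simpa using (hasDerivAt_pow 6 x).const_mul (-q₂)
    have h2 := h1.exp
    have h3 := ((hasDerivAt_const x ν₀).sub (h2.const_mul c)).mul (hasDerivAt_id x)
    have heq : (fun x => ν' x * x)
        = fun x => (ν₀ - c * Real.exp (-q₂ * x ^ 6)) * x := by
      funext y; rw [ν', hcdef]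
    have h4 : HasDerivAt (fun x => ν' x * x) (F' x) x := by
      rw [heq]
      refine h3.congr_deriv ?_
      simp only [hF', id_eq, Pi.sub_apply]; ring
    exact h4.hasDerivWithinAt
  have hbound : ∀ x ∈ Set.Ici (0:ℝ),
      ‖F' x‖ ≤ ν₀ + 6 * c / Real.exp 1 := by
    intro x hx
    have hx0 : (0:ℝ) ≤ x := hx
    have hu : (0:ℝ) ≤ q₂ * x ^ 6 := by rw [q₂]; positivity
    set u : ℝ := q₂ * x ^ 6 with hudef
    clear_value u
    have hE : Real.exp (-u) ≤ 1 := Real.exp_le_one_iff.mpr (by linarith)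
    have hEpos : 0 < Real.exp (-u) := Real.exp_pos _
    have hue : u * Real.exp (-u) ≤ (Real.exp 1)⁻¹ := ue_le u hu
    have hepos : 0 < Real.exp 1 := Real.exp_pos 1
    have harg : -q₂ * x ^ 6 = -u := by rw [hudef]; ring
    have hrw : F' x = ν₀ - c * Real.exp (-u) + 6 * c * (u * Real.exp (-u)) := by
      simp only [hF', harg]; rw [hudef]; ring
    have hν : (0:ℝ) ≤ ν₀ := by linarith [nu0_ge]
    have hcnu : ν₀ - c = 200 := by rw [hcdef]; exact hq1
    clear_value c
    rw [Real.norm_eq_abs, hrw, abs_le]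
    have hdiv : (0:ℝ) ≤ 6 * c / Real.exp 1 := by positivity
    have h1 : c * Real.exp (-u) ≤ c := by nlinarith
    have h2 : 6 * c * (u * Real.exp (-u)) ≤ 6 * c / Real.exp 1 := by
      rw [div_eq_mul_inv]; nlinarith
    have h2' : 0 ≤ 6 * c * (u * Real.exp (-u)) := by positivity
    have h0 : 0 ≤ c * Real.exp (-u) := by positivity
    constructor <;> linarith
  have := (convex_Ici (0:ℝ)).norm_image_sub_le_of_norm_hasDerivWithin_le
    hderiv hbound ht hs
  simpa [Real.norm_eq_abs] using this
end

section
/- Let X and Y be real vector spaces, τ > 0, and ℓ : [0,τ] → ℝ with ℓ(0) = 0 and ℓ(ε) > 0 for ε ∈ (0,τ]. Let G : [0,τ] × X × Y → ℝ be such that for every ε ∈ [0,τ] and u ∈ X the map q ↦ G(ε,u,q) is affine on Y, and such that for all ε ∈ [0,τ], v, w ∈ X and p ∈ Y the real function s ↦ G(ε, v + s·w, p) is continuously differentiable on [0,1]; write ∂ᵤG(ε,v,p)(w) for its derivative at s = 0. For every ε ∈ [0,τ] let u_ε ∈ X satisfy the state equation G(ε, u_ε, φ) − G(ε, u_ε,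 0) = 0 for all φ ∈ Y, and let p₀ ∈ Y satisfy the adjoint equation ∂ᵤG(0, u₀, p₀)(φ) = 0 for all φ ∈ X. Assume that the following three limits as ε ↘ 0 exist: (1) ∂_ℓG(0,u₀,p₀) := lim (G(ε,u₀,p₀) − G(0,u₀,p₀))/ℓ(ε); (2) R₁ := lim R₁^ε where R₁^ε := (1/ℓ(ε)) ∫₀¹ [∂ᵤG(ε, s·u_ε + (1−s)·u₀, p₀)(u_ε − u₀) − ∂ᵤG(ε, u₀, p₀)(u_ε − u₀)] ds; (3) R₂ := lim R₂^ε where R₂^ε := (1/ℓ(ε)) [∂ᵤG(ε, u₀, p₀)(u_ε − u₀) − ∂ᵤG(0, u₀, p₀)(u_ε − u₀)]. Then the function g(ε) := G(ε, u_ε, 0) is one-sided ℓ-differentiable at 0 and lim_{ε ↘ 0} (g(ε) − g(0))/ℓ(ε) = ∂_ℓG(0,u₀,p₀) + R₁ + R₂. -/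
open MeasureTheory Filter

/-- Delfour's theorem on one-sided `ℓ`-differentiability of the function
`g(ε) = G(ε, u_ε, 0)` associated to a parametrised Lagrangian `G`.

Here `∂ᵤG(ε,v,p)(w)` is formalized as `deriv (fun s : ℝ => G ε (v + s • w) p) 0`. -/
theorem stmt14
    {X Y : Type*} [AddCommGroup X] [Module ℝ X] [AddCommGroup Y] [Module ℝ Y]
    (τ : ℝ) (hτ : 0 < τ)
    (ℓ : ℝ → ℝ) (hℓ0 : ℓ 0 = 0) (hℓpos : ∀ ε ∈ Set.Ioc 0 τ, 0 < ℓ ε)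
    (G : ℝ → X → Y → ℝ)
    -- `q ↦ G(ε,u,q)` is affine on `Y`:
    (haff : ∀ ε ∈ Set.Icc 0 τ, ∀ u : X,
      IsLinearMap ℝ (fun q : Y => G ε u q - G ε u 0))
    -- `s ↦ G(ε, v + s·w, p)` is continuously differentiable on `[0,1]`:
    (hdiff : ∀ ε ∈ Set.Icc 0 τ, ∀ (v w : X) (p : Y),
      ContDiffOn ℝ 1 (fun s : ℝ => G ε (v + s • w) p) (Set.Icc (0 : ℝ) 1))
    -- the states `u_ε` solve the state equation:
    (u : ℝ → X)
    (hstate : ∀ ε ∈ Set.Icc 0 τ, ∀ φ : Y, G ε (u ε) φ - G ε (u ε) 0 = 0)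
    -- the adjoint state `p₀` solves the adjoint equation at `ε = 0`:
    (p₀ : Y)
    (hadj : ∀ φ : X, deriv (fun s : ℝ => G 0 (u 0 + s • φ) p₀) 0 = 0)
    -- the three limits as `ε ↘ 0` exist:
    (dlG R1 R2 : ℝ)
    (hlim1 : Tendsto (fun ε : ℝ => (G ε (u 0) p₀ - G 0 (u 0) p₀) / ℓ ε)
      (nhdsWithin 0 (Set.Ioc 0 τ)) (nhds dlG))
    (hlim2 : Tendsto (fun ε : ℝ => (1 / ℓ ε) *
        ∫ s in (0 : ℝ)..1,
          (deriv (fun r : ℝ =>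
              G ε ((s • u ε + (1 - s) • u 0) + r • (u ε - u 0)) p₀) 0
            - deriv (fun r : ℝ => G ε (u 0 + r • (u ε - u 0)) p₀) 0))
      (nhdsWithin 0 (Set.Ioc 0 τ)) (nhds R1))
    (hlim3 : Tendsto (fun ε : ℝ => (1 / ℓ ε) *
        (deriv (fun r : ℝ => G ε (u 0 + r • (u ε - u 0)) p₀) 0
          - deriv (fun r : ℝ => G 0 (u 0 + r • (u ε - u 0)) p₀) 0))
      (nhdsWithin 0 (Set.Ioc 0 τ)) (nhds R2)) :
    -- then `g(ε) = G(ε, u_ε, 0)` is one-sided `ℓ`-differentiable at `0` with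
    -- `d_ℓ g(0) = ∂_ℓ G(0,u₀,p₀) + R₁ + R₂`:
    Tendsto (fun ε : ℝ => (G ε (u ε) 0 - G 0 (u 0) 0) / ℓ ε)
      (nhdsWithin 0 (Set.Ioc 0 τ)) (nhds (dlG + R1 + R2)) := by
  refine Tendsto.congr' ?_ ((hlim1.add hlim2).add hlim3)
  filter_upwards [self_mem_nhdsWithin] with ε hε
  have hε' : ε ∈ Set.Icc 0 τ := ⟨hε.1.le, hε.2⟩
  have h0' : (0:ℝ) ∈ Set.Icc 0 τ := ⟨le_rfl, hτ.le⟩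
  have hℓ : ℓ ε ≠ 0 := (hℓpos ε hε).ne'
  set δ : X := u ε - u 0 with hδ
  set f : ℝ → ℝ := fun s => G ε (u 0 + s • δ) p₀ with hf
  have hcd : ContDiffOn ℝ 1 f (Set.Icc 0 1) := hdiff ε hε' (u 0) δ p₀
  -- the shifted derivatives equal `deriv f s`
  have hshift : ∀ s : ℝ,
      deriv (fun r : ℝ => G ε ((s • u ε + (1 - s) • u 0) + r • δ) p₀) 0
        = deriv f s := by
    intro s
    have harg : (fun r : ℝ => G ε ((s • u ε + (1 - s) • u 0) + r • δ) p₀)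
        = fun r : ℝ => f (s + r) := by
      funext r
      have : (s • u ε + (1 - s) • u 0) + r • δ = u 0 + (s + r) • δ := by
        simp only [hδ]; module
      simp only [hf, this]
    rw [harg]
    simpa using deriv_comp_const_add f s 0
  -- FTC ingredients
  have hder : ∀ x ∈ Set.Ioo (0:ℝ) 1, HasDerivAt f (deriv f x) x := by
    intro x hx
    have hmem : Set.Icc (0:ℝ) 1 ∈ nhds x := Icc_mem_nhds hx.1 hx.2
    exact ((hcd.differentiableOn one_ne_zero).differentiableAt hmem).hasDerivAt
  have hdw : ContinuousOn (derivWithin f (Set.Icc 0 1)) (Set.Icc (0:ℝ) 1) :=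
    hcd.continuousOn_derivWithin (uniqueDiffOn_Icc one_pos) le_rfl
  have hint : IntervalIntegrable (deriv f) volume 0 1 := by
    have h1 : IntervalIntegrable (derivWithin f (Set.Icc 0 1)) volume 0 1 := by
      apply ContinuousOn.intervalIntegrable
      rwa [Set.uIcc_of_le zero_le_one]
    refine h1.congr_ae ?_
    have hae : ∀ᵐ x : ℝ ∂(volume.restrict (Set.uIoc (0:ℝ) 1)), x ≠ 1 := by
      refine ae_restrict_of_ae ?_
      simpa using (Set.countable_singleton (1:ℝ)).ae_notMem volume
    have hmem : ∀ᵐ x : ℝ ∂(volume.restrict (Set.uIoc (0:ℝ) 1)), x ∈ Set.uIoc (0:ℝ) 1 :=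
      ae_restrict_mem measurableSet_uIoc
    filter_upwards [hae, hmem] with x hx1 hx2
    rw [Set.uIoc_of_le zero_le_one] at hx2
    have hxoo : x ∈ Set.Ioo (0:ℝ) 1 := ⟨hx2.1, lt_of_le_of_ne hx2.2 hx1⟩
    exact derivWithin_of_mem_nhds (Icc_mem_nhds hxoo.1 hxoo.2)
  have hFTC : ∫ s in (0:ℝ)..1, deriv f s = f 1 - f 0 :=
    intervalIntegral.integral_eq_sub_of_hasDerivAt_of_le zero_le_one hcd.continuousOn
      hder hint
  -- compute the integral appearing in `hlim2`
  have hIntegral :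
      (∫ s in (0:ℝ)..1,
        (deriv (fun r : ℝ => G ε ((s • u ε + (1 - s) • u 0) + r • δ) p₀) 0
          - deriv (fun r : ℝ => G ε (u 0 + r • δ) p₀) 0))
        = (f 1 - f 0) - deriv f 0 := by
    have : (fun s : ℝ =>
        deriv (fun r : ℝ => G ε ((s • u ε + (1 - s) • u 0) + r • δ) p₀) 0
          - deriv (fun r : ℝ => G ε (u 0 + r • δ) p₀) 0)
        = fun s : ℝ => deriv f s - deriv f 0 := by
      funext s; rw [hshift s]
    rw [this, intervalIntegral.integral_sub hint intervalIntegrable_const,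
      hFTC, intervalIntegral.integral_const]
    simp
  -- endpoints of `f`
  have hf1 : f 1 = G ε (u ε) p₀ := by simp [hf, hδ]
  have hf0 : f 0 = G ε (u 0) p₀ := by simp [hf]
  -- adjoint equation kills the last derivative
  have hadj' : deriv (fun r : ℝ => G 0 (u 0 + r • δ) p₀) 0 = 0 := hadj δ
  -- state equations
  have hst1 : G ε (u ε) p₀ = G ε (u ε) 0 := by
    have := hstate ε hε' p₀; linarith
  have hst0 : G 0 (u 0) p₀ = G 0 (u 0) 0 := by
    have := hstate 0 h0' p₀; linarith
  have h2nd : deriv (fun r : ℝ => G ε (u 0 + r • δ) p₀) 0 = deriv f 0 := rfl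
  rw [hIntegral, hadj', h2nd, hf1, hf0, hst1, hst0]
  field_simp
  ring
end
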